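/- Let A be a normal n×n complex matrix and B any n×n complex matrix, and let q ∈ ℝ. Then f(A,B;q) ≤ c(q)‖A‖²‖B‖², where c(q) = ((1+q) + √(2(1+q²)))/2. -/

import Mathlib

open Matrix Complex BigOperators

/-- Squared Frobenius (Hilbert-Schmidt) norm: ‖X‖² = tr(X*X). -/
noncomputable def frobSq {n : ℕ} (X : Matrix (Fin n) (Fin n) ℂ) : ℝ :=
  (Matrix.trace (Xᴴ * X)).re

/-- Hilbert-Schmidt inner product ⟨X,Y⟩ = tr(X*Y). -/
noncomputable def hsInner {n : ℕ} (X Y : Matrix (Fin n) (Fin n) ℂ) : ℂ :=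
  Matrix.trace (Xᴴ * Y)

/-- f(A,B;q) = Re⟨[B,A],[B,A]_q⟩ where [X,Y]_q = XY − qYX. -/
noncomputable def fFun {n : ℕ} (A B : Matrix (Fin n) (Fin n) ℂ) (q : ℝ) : ℝ :=
  (hsInner (B * A - A * B) (B * A - (q : ℂ) • (A * B))).re

/-- r(A,B) = (1/2)(⟨[B,A],BA⟩ + ⟨[B,A*],BA*⟩). -/
noncomputable def rFun {n : ℕ} (A B : Matrix (Fin n) (Fin n) ℂ) : ℂ :=
  (1/2 : ℂ) * (hsInner (B * A - A * B) (B * A) + hsInner (B * Aᴴ - Aᴴ * B) (B * Aᴴ))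

/-- c(q) = ((1+q) + √(2(1+q²)))/2. -/
noncomputable def cq (q : ℝ) : ℝ := ((1 + q) + Real.sqrt (2 * (1 + q ^ 2))) / 2

/-!
A normal matrix is unitarily diagonalizable, since its real and imaginary parts are commuting
Hermitian matrices and so share an orthonormal eigenbasis; unitary conjugation changes neither
`f` nor the Frobenius norms. For `A = diag d` one has
`f(A,B;q) = ∑ |B i j|² Re(conj(d j - d i) (d j - q d i))`, and each weight is bounded by
`c(q) (|d i|² + |d j|²)`: the weight is the Hermitian form `|y|² + q|x|² - (1+q) Re(x̄ y)` on `ℂ²`,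
whose largest eigenvalue is `c(q)`, the larger root of `(c - q)(c - 1) = ((1+q)/2)²`.
-/

open Module Module.End ComplexStarModule Unitary ComplexConjugate

theorem LinearMap.IsSymmetric.exists_orthonormalBasis_eigenvectors_of_commute
    {𝕜 E ι : Type*} [RCLike 𝕜] [NormedAddCommGroup E] [InnerProductSpace 𝕜 E]
    [FiniteDimensional 𝕜 E] [Fintype ι] {S T : E →ₗ[𝕜] E} (hS : S.IsSymmetric)
    (hT : T.IsSymmetric) (hST : Commute S T) (hι : finrank 𝕜 E = Fintype.card ι) :
    ∃ (b : OrthonormalBasis ι 𝕜 E) (μ ν : ι → 𝕜),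
      ∀ i, S (b i) = μ i • b i ∧ T (b i) = ν i • b i := by
  classical
  set V : 𝕜 × 𝕜 → Submodule 𝕜 E := fun p ↦ eigenspace S p.2 ⊓ eigenspace T p.1
  have hV : DirectSum.IsInternal V := hS.directSum_isInternal_of_commute hT hST
  let _ := hV.submodule_iSupIndep.fintypeNeBotOfFiniteDimensional
  have hV₀ := DirectSum.isInternal_ne_bot_iff.mpr hV
  have hV' := (hS.orthogonalFamily_eigenspace_inf_eigenspace hT).comp
    (Subtype.val_injective (p := fun p ↦ V p ≠ ⊥))
  set e := Fintype.equivFin ι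
  refine ⟨(hV₀.subordinateOrthonormalBasis hι hV').reindex e.symm,
    fun i ↦ (hV₀.subordinateOrthonormalBasisIndex hι (e i) hV').1.2,
    fun i ↦ (hV₀.subordinateOrthonormalBasisIndex hι (e i) hV').1.1, fun i ↦ ?_⟩
  have hmem := hV₀.subordinateOrthonormalBasis_subordinate hι (e i) hV'
  simp only [OrthonormalBasis.reindex_apply, Equiv.symm_symm]
  exact ⟨mem_eigenspace_iff.mp hmem.1, mem_eigenspace_iff.mp hmem.2⟩

theorem Matrix.exists_conjStarAlgAut_eq_diagonal_of_orthonormalBasis {𝕜 m : Type*} [RCLike 𝕜]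
    [Fintype m] [DecidableEq m] {A : Matrix m m 𝕜} (b : OrthonormalBasis m 𝕜 (EuclideanSpace 𝕜 m))
    (d : m → 𝕜) (hb : ∀ i, toEuclideanLin A (b i) = d i • b i) :
    ∃ u : unitaryGroup m 𝕜, conjStarAlgAut 𝕜 _ u A = diagonal d := by
  set U := (EuclideanSpace.basisFun m 𝕜).toBasis.toMatrix b.toBasis
  have hU : U ∈ unitaryGroup m 𝕜 :=
    (EuclideanSpace.basisFun m 𝕜).toMatrix_orthonormalBasis_mem_unitary b
  have hU_single : ∀ i, U *ᵥ Pi.single i 1 = ⇑(b i) := fun i ↦ by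
    rw [mulVec_single_one]; rfl
  have hU_star : ∀ i, star U *ᵥ ⇑(b i) = Pi.single i 1 := fun i ↦ by
    rw [← hU_single, mulVec_mulVec, mem_unitaryGroup_iff'.mp hU, one_mulVec]
  have hAb : ∀ i, A *ᵥ ⇑(b i) = d i • ⇑(b i) := fun i ↦ congr(WithLp.ofLp $(hb i))
  refine ⟨star ⟨U, hU⟩, toEuclideanLin.injective <|
    (EuclideanSpace.basisFun m 𝕜).toBasis.ext fun i ↦ ?_⟩
  simp only [conjStarAlgAut_star_apply, toLpLin_apply, OrthonormalBasis.coe_toBasis,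
    EuclideanSpace.basisFun_apply, PiLp.ofLp_single, ← mulVec_mulVec, hU_single, hAb,
    diagonal_mulVec_single, mulVec_smul, hU_star, WithLp.toLp_smul, PiLp.toLp_single, mul_one]
  exact PiLp.ext fun j ↦ by
    simp only [PiLp.smul_apply, PiLp.single_apply, smul_eq_mul, mul_ite, mul_one, mul_zero]

theorem Matrix.exists_conjStarAlgAut_eq_diagonal_of_isStarNormal {m : Type*} [Fintype m]
    [DecidableEq m] (A : Matrix m m ℂ) [IsStarNormal A] :
    ∃ (u : unitaryGroup m ℂ) (d : m → ℂ), conjStarAlgAut ℂ _ u A = diagonal d := by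
  have hcomm : Commute (toEuclideanLin (ℜ A : Matrix m m ℂ))
      (toEuclideanLin (ℑ A : Matrix m m ℂ)) := by
    have := congrArg toEuclideanLin (Commute.realPart_imaginaryPart A).eq
    rwa [toLpLin_mul_same, toLpLin_mul_same] at this
  obtain ⟨b, μ, ν, hb⟩ := (isSymmetric_toEuclideanLin_iff.mpr (ℜ A).2)
    |>.exists_orthonormalBasis_eigenvectors_of_commute
      (isSymmetric_toEuclideanLin_iff.mpr (ℑ A).2) hcomm finrank_euclideanSpace
  obtain ⟨u, hu⟩ := exists_conjStarAlgAut_eq_diagonal_of_orthonormalBasis (A := A) b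
    (fun i ↦ μ i + I * ν i) fun i ↦ by
      conv_lhs => rw [← realPart_add_I_smul_imaginaryPart A]
      rw [map_add, map_smul, LinearMap.add_apply, LinearMap.smul_apply, (hb i).1, (hb i).2,
        smul_smul, add_smul]
  exact ⟨u, _, hu⟩

theorem Matrix.trace_conjStarAlgAut {m R : Type*} [Fintype m] [DecidableEq m] [CommRing R]
    [StarRing R] (u : unitaryGroup m R) (X : Matrix m m R) :
    trace (conjStarAlgAut R _ u X) = trace X := by
  rw [conjStarAlgAut_apply, trace_mul_cycle, coe_star_mul_self, one_mul]

section Invariance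

variable {n : ℕ} (u : unitaryGroup (Fin n) ℂ)

lemma hsInner_conjStarAlgAut (X Y : Matrix (Fin n) (Fin n) ℂ) :
    hsInner (conjStarAlgAut ℂ _ u X) (conjStarAlgAut ℂ _ u Y) = hsInner X Y := by
  unfold hsInner
  rw [← star_eq_conjTranspose, ← map_star, ← map_mul, trace_conjStarAlgAut, star_eq_conjTranspose]

lemma frobSq_conjStarAlgAut (X : Matrix (Fin n) (Fin n) ℂ) :
    frobSq (conjStarAlgAut ℂ _ u X) = frobSq X :=
  congrArg re (hsInner_conjStarAlgAut u X X)

lemma fFun_conjStarAlgAut (A B : Matrix (Fin n) (Fin n) ℂ) (q : ℝ) :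
    fFun (conjStarAlgAut ℂ _ u A) (conjStarAlgAut ℂ _ u B) q = fFun A B q := by
  unfold fFun
  rw [← map_mul, ← map_mul, ← map_sub, ← map_smul, ← map_sub, hsInner_conjStarAlgAut]

end Invariance

lemma abs_sub_one_le_sqrt (q : ℝ) : |q - 1| ≤ √(2 * (1 + q ^ 2)) :=
  Real.abs_le_sqrt (by nlinarith [sq_nonneg (q + 1)])

lemma self_le_cq (q : ℝ) : q ≤ cq q := by
  unfold cq; linarith [le_abs_self (q - 1), abs_sub_one_le_sqrt q]

lemma one_le_cq (q : ℝ) : 1 ≤ cq q := by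
  unfold cq; linarith [neg_abs_le (q - 1), abs_sub_one_le_sqrt q]

lemma cq_sub_mul_cq_sub (q : ℝ) : (cq q - q) * (cq q - 1) = ((1 + q) / 2) ^ 2 := by
  have hs : √(2 * (1 + q ^ 2)) ^ 2 = 2 * (1 + q ^ 2) := Real.sq_sqrt (by positivity)
  unfold cq; linear_combination hs / 4

lemma two_mul_mul_le_of_mul_eq_sq {α β k : ℝ} (hα : 0 ≤ α) (hβ : 0 ≤ β) (hk : 0 ≤ k)
    (hαβ : α * β = k ^ 2) (a b : ℝ) : 2 * k * a * b ≤ α * a ^ 2 + β * b ^ 2 := by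
  have hsqrt : √α * √β = k := by rw [← Real.sqrt_mul hα, hαβ, Real.sqrt_sq hk]
  calc 2 * k * a * b = 2 * (√α * a) * (√β * b) := by rw [← hsqrt]; ring
    _ ≤ (√α * a) ^ 2 + (√β * b) ^ 2 := two_mul_le_add_sq _ _
    _ = α * a ^ 2 + β * b ^ 2 := by rw [mul_pow, mul_pow, Real.sq_sqrt hα, Real.sq_sqrt hβ]

lemma re_conj_mul_le_cq (q : ℝ) (x y : ℂ) :
    (conj (y - x) * (y - q * x)).re ≤ cq q * (normSq x + normSq y) := by
  have hexpand : (conj (y - x) * (y - q * x)).re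
      = normSq y + q * normSq x - (1 + q) * (conj x * y).re := by
    simp only [mul_re, mul_im, conj_re, conj_im, sub_re, sub_im, ofReal_re, ofReal_im, normSq_apply]
    ring
  have hcross : -((1 + q) * (conj x * y).re) ≤ |1 + q| * (‖x‖ * ‖y‖) := by
    calc -((1 + q) * (conj x * y).re) ≤ |(1 + q) * (conj x * y).re| := neg_le_abs _
      _ ≤ |1 + q| * (‖x‖ * ‖y‖) := by
        rw [abs_mul, ← norm_conj x, ← norm_mul]
        exact mul_le_mul_of_nonneg_left (abs_re_le_norm _) (abs_nonneg _)
  rw [hexpand, normSq_eq_norm_sq, normSq_eq_norm_sq]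
  have hamgm := two_mul_mul_le_of_mul_eq_sq (sub_nonneg.mpr (self_le_cq q))
    (sub_nonneg.mpr (one_le_cq q)) (k := |1 + q| / 2) (by positivity)
    (by rw [cq_sub_mul_cq_sub, div_pow, div_pow, sq_abs])
    ‖x‖ ‖y‖
  linarith

section Diagonal

variable {n : ℕ}

lemma hsInner_eq_sum (X Y : Matrix (Fin n) (Fin n) ℂ) :
    hsInner X Y = ∑ j, ∑ i, conj (X i j) * Y i j := by
  simp only [hsInner, trace, diag_apply, Matrix.mul_apply, conjTranspose_apply, RCLike.star_def]

lemma frobSq_eq_sum (X : Matrix (Fin n) (Fin n) ℂ) :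
    frobSq X = ∑ j, ∑ i, normSq (X i j) := by
  simp only [frobSq, ← hsInner.eq_1, hsInner_eq_sum, re_sum, ← normSq_eq_conj_mul_self, ofReal_re]

lemma frobSq_diagonal (d : Fin n → ℂ) : frobSq (diagonal d) = ∑ i, normSq (d i) := by
  simp [frobSq_eq_sum, diagonal_apply, apply_ite normSq]

lemma fFun_diagonal (d : Fin n → ℂ) (B : Matrix (Fin n) (Fin n) ℂ) (q : ℝ) :
    fFun (diagonal d) B q
      = ∑ j, ∑ i, normSq (B i j) * (conj (d j - d i) * (d j - q * d i)).re := by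
  simp only [fFun, hsInner_eq_sum, re_sum, Matrix.sub_apply, Matrix.smul_apply, mul_diagonal,
    diagonal_mul]
  refine Finset.sum_congr rfl fun j _ ↦ Finset.sum_congr rfl fun i _ ↦ ?_
  rw [← re_ofReal_mul, normSq_eq_conj_mul_self]
  congr 1
  simp only [map_sub, map_mul, smul_eq_mul]
  ring

lemma fFun_diagonal_le (d : Fin n → ℂ) (B : Matrix (Fin n) (Fin n) ℂ) (q : ℝ) :
    fFun (diagonal d) B q ≤ cq q * frobSq (diagonal d) * frobSq B := by
  have hcq : 0 ≤ cq q := zero_le_one.trans (one_le_cq q)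
  have hterm : ∀ i j, (conj (d j - d i) * (d j - q * d i)).re ≤ cq q * ∑ k, normSq (d k) := by
    intro i j
    rcases eq_or_ne i j with rfl | hij
    · simpa using mul_nonneg hcq (Finset.sum_nonneg fun k _ ↦ normSq_nonneg (d k))
    · calc (conj (d j - d i) * (d j - q * d i)).re ≤ cq q * (normSq (d i) + normSq (d j)) :=
            re_conj_mul_le_cq q (d i) (d j)
        _ ≤ cq q * ∑ k, normSq (d k) := by
          rw [← Finset.sum_pair hij (f := fun k ↦ normSq (d k))]
          gcongr
          · exact fun k _ _ ↦ normSq_nonneg (d k)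
          · exact Finset.subset_univ _
  calc fFun (diagonal d) B q
      = ∑ j, ∑ i, normSq (B i j) * (conj (d j - d i) * (d j - q * d i)).re := fFun_diagonal d B q
    _ ≤ ∑ j, ∑ i, normSq (B i j) * (cq q * ∑ k, normSq (d k)) := by
      gcongr with j _ i _
      · exact normSq_nonneg _
      · exact hterm i j
    _ = cq q * frobSq (diagonal d) * frobSq B := by
      rw [frobSq_diagonal, frobSq_eq_sum B]
      simp only [← Finset.sum_mul]
      ring

end Diagonal

theorem f_bound_of_normal (n : ℕ) (A B : Matrix (Fin n) (Fin n) ℂ)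
    (hA : A * Aᴴ = Aᴴ * A) (q : ℝ) :
    fFun A B q ≤ cq q * frobSq A * frobSq B := by
  have : IsStarNormal A := ⟨hA.symm⟩
  obtain ⟨u, d, hd⟩ := exists_conjStarAlgAut_eq_diagonal_of_isStarNormal A
  set φ := conjStarAlgAut ℂ (Matrix (Fin n) (Fin n) ℂ) u
  calc fFun A B q = fFun (diagonal d) (φ B) q := by rw [← hd, fFun_conjStarAlgAut]
    _ ≤ cq q * frobSq (diagonal d) * frobSq (φ B) := fFun_diagonal_le d (φ B) q
    _ = cq q * frobSq A * frobSq B := by rw [← hd, frobSq_conjStarAlgAut, frobSq_conjStarAlgAut]
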